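/- The Q_POMDP value function is an upper bound to the Q_BG value function: in a two-agent finite-horizon model, at each stage and for each joint belief b and joint action a, Q_BG^t(b,a) ≤ Q_POMDP^t(b,a), where Q_BG is defined with the future-reward maximization ranging over decentralized policies β = (β_1, β_2) where β_i maps agent i's individual last observation to an individual action, while Q_POMDP maximizes the joint action per joint observation. -/

import Mathlib

/-!
Induction on the stage. Bayes updates of a nonnegative belief stay nonnegative, so the
observation probabilities are nonnegative weights; a maximum over decentralized policies of a
weighted sum is then at most the weighted sum of the pointwise maxima over joint actions.
-/

open Finset

variable {S A₁ A₂ O₁ O₂ : Type*} [Fintype S] [Fintype A₁] [Fintype A₂]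
  [Fintype O₁] [Fintype O₂] [Nonempty A₁] [Nonempty A₂]
  [DecidableEq O₁] [DecidableEq O₂]

/-- Probability `Pr(o | b, a)` of the joint observation `o` after joint action `a`. -/
noncomputable def Pobs8 (T : S → A₁ × A₂ → S → ℝ) (Ω : A₁ × A₂ → S → O₁ × O₂ → ℝ)
    (b : S → ℝ) (a : A₁ × A₂) (o : O₁ × O₂) : ℝ :=
  ∑ s' : S, Ω a s' o * ∑ s : S, T s a s' * b s

/-- Bayes joint-belief update `b^{a,o}`. -/
noncomputable def bUpd8 (T : S → A₁ × A₂ → S → ℝ) (Ω : A₁ × A₂ → S → O₁ × O₂ → ℝ)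
    (b : S → ℝ) (a : A₁ × A₂) (o : O₁ × O₂) : S → ℝ :=
  fun s' => Ω a s' o * (∑ s : S, T s a s' * b s) / Pobs8 T Ω b a o

/-- `Q_POMDP` for the two-agent model: the future joint action is chosen per joint
observation. -/
noncomputable def QP8 (T : S → A₁ × A₂ → S → ℝ) (Ω : A₁ × A₂ → S → O₁ × O₂ → ℝ)
    (R : S → A₁ × A₂ → ℝ) : ℕ → (S → ℝ) → A₁ × A₂ → ℝ
  | 0, b, a => ∑ s : S, b s * R s a
  | k + 1, b, a =>
      (∑ s : S, b s * R s a) +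
        ∑ o : O₁ × O₂, Pobs8 T Ω b a o *
          Finset.univ.sup' Finset.univ_nonempty
            (fun a' : A₁ × A₂ => QP8 T Ω R k (bUpd8 T Ω b a o) a')

/-- `Q_BG`: the future-reward maximization ranges over decentralized policies
`β = (β₁, β₂)` mapping each agent's individual last observation to its action. -/
noncomputable def QBG8 (T : S → A₁ × A₂ → S → ℝ) (Ω : A₁ × A₂ → S → O₁ × O₂ → ℝ)
    (R : S → A₁ × A₂ → ℝ) : ℕ → (S → ℝ) → A₁ × A₂ → ℝ
  | 0, b, a => ∑ s : S, b s * R s a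
  | k + 1, b, a =>
      (∑ s : S, b s * R s a) +
        Finset.univ.sup' Finset.univ_nonempty
          (fun β : (O₁ → A₁) × (O₂ → A₂) =>
            ∑ o : O₁ × O₂, Pobs8 T Ω b a o *
              QBG8 T Ω R k (bUpd8 T Ω b a o) (β.1 o.1, β.2 o.2))

theorem Finset.sup'_sum_mul_le_sum_mul_sup' {ι α π : Type*} [Fintype ι] [Fintype α] [Nonempty α]
    {s : Finset π} (hs : s.Nonempty) (act : π → ι → α) {w : ι → ℝ} (hw : ∀ i, 0 ≤ w i)
    {f g : ι → α → ℝ} (hfg : ∀ i x, f i x ≤ g i x) :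
    s.sup' hs (fun p => ∑ i, w i * f i (act p i)) ≤
      ∑ i, w i * univ.sup' univ_nonempty (g i) :=
  Finset.sup'_le hs _ fun _ _ => Finset.sum_le_sum fun i _ =>
    mul_le_mul_of_nonneg_left ((hfg i _).trans (le_sup' (g i) (mem_univ _))) (hw i)

theorem stmt_8_general (T : S → A₁ × A₂ → S → ℝ) (Ω : A₁ × A₂ → S → O₁ × O₂ → ℝ)
    (R : S → A₁ × A₂ → ℝ)
    (hT : ∀ s a s', 0 ≤ T s a s')
    (hΩ : ∀ a s' o, 0 ≤ Ω a s' o)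
    (k : ℕ) (b : S → ℝ) (hb : ∀ s, 0 ≤ b s) (a : A₁ × A₂) :
    QBG8 T Ω R k b a ≤ QP8 T Ω R k b a := by
  induction k generalizing b a with
  | zero => rfl
  | succ k ih =>
    have hPred : ∀ s', 0 ≤ ∑ s, T s a s' * b s :=
      fun _ => sum_nonneg fun s _ => mul_nonneg (hT ..) (hb s)
    have hPobs : ∀ o, 0 ≤ Pobs8 T Ω b a o :=
      fun _ => sum_nonneg fun _ _ => mul_nonneg (hΩ ..) (hPred _)
    have hUpd : ∀ o s', 0 ≤ bUpd8 T Ω b a o s' :=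
      fun o _ => div_nonneg (mul_nonneg (hΩ ..) (hPred _)) (hPobs o)
    rw [QBG8, QP8]
    gcongr _ + ?_
    exact Finset.sup'_sum_mul_le_sum_mul_sup' _ _ hPobs fun o => ih _ (hUpd o)

/-- `Q_POMDP` is an upper bound to `Q_BG`: at each stage, joint belief
`b` and joint action `a`, `Q_BG(b,a) ≤ Q_POMDP(b,a)`. -/
theorem stmt_8 (T : S → A₁ × A₂ → S → ℝ) (Ω : A₁ × A₂ → S → O₁ × O₂ → ℝ)
    (R : S → A₁ × A₂ → ℝ)
    (hT : ∀ s a s', 0 ≤ T s a s') (hT1 : ∀ s a, ∑ s', T s a s' = 1)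
    (hΩ : ∀ a s' o, 0 ≤ Ω a s' o) (hΩ1 : ∀ a s', ∑ o, Ω a s' o = 1)
    (k : ℕ) (b : S → ℝ) (hb : ∀ s, 0 ≤ b s) (hb1 : ∑ s, b s = 1) (a : A₁ × A₂) :
    QBG8 T Ω R k b a ≤ QP8 T Ω R k b a :=
  stmt_8_general T Ω R hT hΩ k b hb a
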